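/- arXiv:1003.4539 — 7 statements merged into one kernel-verified Lean document; each statement's English description precedes it below -/
import Mathlib

section
/- Let G ∈ F^{k×n} be a generator matrix with rows g_1,...,g_k having spans (a_l, b_l], and let M_i ∈ F^{k×k} be the diagonal matrix with (l,l)-entry equal to 1 if i ∈ (a_l,b_l] and 0 otherwise. If the starting points a_1,...,a_k are pairwise distinct, then for each i, rank(M_i, G_i, M_{i+1}) = rank(M_i) + [i ∈ {a_1,...,a_k}], where G_i is the i-th column of G and [·] is the indicator. -/
/-- Membership in the half-open circular interval `(a, b]` on `ZMod n`, with `(a,a] = ∅`. -/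
def circMem (n : ℕ) [NeZero n] (a b j : ZMod n) : Prop :=
  j ≠ a ∧ (j - a).val ≤ (b - a).val

instance (n : ℕ) [NeZero n] (a b j : ZMod n) : Decidable (circMem n a b j) :=
  inferInstanceAs (Decidable (_ ∧ _))

/-- `(a, b]` is a span of `g` : `g` is nonzero at `a` and `b` and vanishes outside the
closed span `[a,b] = {a} ∪ (a,b]`. -/
def IsSpan {F : Type*} [Field F] {n : ℕ} [NeZero n] (g : ZMod n → F) (a b : ZMod n) : Prop :=
  g a ≠ 0 ∧ g b ≠ 0 ∧ ∀ j : ZMod n, ¬ (j = a ∨ circMem n a b j) → g j = 0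

/-!
Row `l` of `(M_i, G_i, M_{i+1})` vanishes unless `i ∈ (a_l, b_l]` or `i = a_l`, because
`i + 1 ∈ (a_l, b_l]` forces one of the two. The remaining rows are in row-echelon form: a row with
`i ∈ (a_l, b_l]` has the pivot `1` in the `M_i` block, and the row with `a_l = i`, unique since the
starts are distinct, has the pivot `G_{l,i} ≠ 0` in the column `G_i`. Hence the rank counts these
rows: `rank M_i` plus the indicator.
-/

lemma ZMod.val_add_one_of_add_one_ne_zero {n : ℕ} [NeZero n] {x : ZMod n} (h : x + 1 ≠ 0) :
    (x + 1).val = x.val + 1 := by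
  have hcast : x + 1 = ((x.val + 1 : ℕ) : ZMod n) := by simp
  have hlt : x.val + 1 < n := by
    refine lt_of_le_of_ne (ZMod.val_lt x) fun hn => h ?_
    rw [hcast, hn, ZMod.natCast_self]
  rw [hcast, ZMod.val_natCast, Nat.mod_eq_of_lt hlt]

lemma circMem_of_circMem_add_one {n : ℕ} [NeZero n] {a b i : ZMod n}
    (h : circMem n a b (i + 1)) (hi : i ≠ a) : circMem n a b i := by
  obtain ⟨hne, hle⟩ := h
  have hshift : i + 1 - a = (i - a) + 1 := by ring
  rw [hshift, ZMod.val_add_one_of_add_one_ne_zero (by rwa [← hshift, sub_ne_zero])] at hle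
  exact ⟨hi, by omega⟩

lemma Fintype.card_subtype_apply_eq_of_injective {α β : Type*} [Fintype α] [DecidableEq β]
    {f : α → β} (hf : Function.Injective f) (y : β) [Decidable (∃ x, f x = y)] :
    Fintype.card {x // f x = y} = if ∃ x, f x = y then 1 else 0 := by
  split_ifs with h
  · obtain ⟨x, rfl⟩ := h
    simp_rw [hf.eq_iff]
    exact Fintype.card_subtype_eq x
  · exact Fintype.card_eq_zero_iff.mpr ⟨fun ⟨x, hx⟩ => h ⟨x, hx⟩⟩

theorem linearIndependent_of_pivot {ι κ α R : Type*} [Ring R] [NoZeroDivisors R] [Fintype ι]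
    [LinearOrder α] (v : ι → κ → R) (p : ι → κ) (w : ι → α) (hpivot : ∀ l, v l (p l) ≠ 0)
    (hbelow : ∀ l l', l' ≠ l → w l ≤ w l' → v l' (p l) = 0) : LinearIndependent R v := by
  classical
  rw [Fintype.linearIndependent_iff]
  intro c hc
  by_contra! hsupp
  obtain ⟨l, hl, hmin⟩ := Finset.exists_min_image ({l | c l ≠ 0} : Finset ι) w
    (by simpa [Finset.Nonempty] using hsupp)
  have hcoord := congrFun hc (p l)
  rw [Finset.sum_apply, Finset.sum_eq_single l] at hcoord
  · exact mul_ne_zero (by simpa using hl) (hpivot l) hcoord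
  · intro l' _ hl'
    by_cases hc' : c l' = 0
    · simp [hc']
    · simp [hbelow l l' hl' (hmin l' (by simpa using hc'))]
  · simp

theorem Matrix.rank_eq_card_of_row_eq_zero {m n R : Type*} [Field R] [Fintype m] [Fintype n]
    (A : Matrix m n R) (p : m → Prop) [DecidablePred p] (hzero : ∀ l, ¬ p l → A l = 0)
    (hli : LinearIndependent R fun l : {l // p l} => A l) :
    A.rank = Fintype.card {l // p l} := by
  suffices hspan : Submodule.span R (Set.range A.row)
      = Submodule.span R (Set.range fun l : {l // p l} => A l) by
    rw [A.rank_eq_finrank_span_row, hspan, finrank_span_eq_card hli]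
  refine le_antisymm (Submodule.span_le.mpr ?_) (Submodule.span_mono ?_)
  · rintro _ ⟨l, rfl⟩
    by_cases hl : p l
    · exact Submodule.subset_span ⟨⟨l, hl⟩, rfl⟩
    · simp [Matrix.row, hzero l hl]
  · rintro _ ⟨l, rfl⟩
    exact ⟨l, rfl⟩

section Window

variable {F : Type*} [Field F] {n k : ℕ} [NeZero n]

variable (F) in
/-- The matrix `M_i` of the statement. -/
def spanIndicator (a b : Fin k → ZMod n) (i : ZMod n) :
    Matrix (Fin k) (Fin k) F :=
  Matrix.diagonal fun l => if circMem n (a l) (b l) i then 1 else 0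

/-- The matrix `(M_i, G_i, M_{i+1})` of the statement. -/
def windowMatrix (G : Matrix (Fin k) (ZMod n) F) (a b : Fin k → ZMod n) (i : ZMod n) :
    Matrix (Fin k) (Fin k ⊕ Unit ⊕ Fin k) F :=
  Matrix.of fun l j => Sum.elim (fun j' => spanIndicator F a b i l j')
    (Sum.elim (fun _ => G l i) fun j' => spanIndicator F a b (i + 1) l j') j

variable {G : Matrix (Fin k) (ZMod n) F} {a b : Fin k → ZMod n} {i : ZMod n}

lemma rank_spanIndicator :
    (spanIndicator F a b i).rank = Fintype.card {l // circMem n (a l) (b l) i} := by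
  classical
  rw [spanIndicator, Matrix.rank_diagonal]
  exact Fintype.card_congr (Equiv.subtypeEquivRight fun l => by simp)

lemma windowMatrix_row_eq_zero {l : Fin k} (hspan : IsSpan (G l) (a l) (b l))
    (hmem : ¬ circMem n (a l) (b l) i) (hstart : a l ≠ i) : windowMatrix G a b i l = 0 := by
  have hmem_succ : ¬ circMem n (a l) (b l) (i + 1) :=
    fun h => hmem (circMem_of_circMem_add_one h (Ne.symm hstart))
  funext j
  rcases j with j | _ | j
  · simp [windowMatrix, spanIndicator, Matrix.diagonal_apply, hmem]
  · exact hspan.2.2 i (by tauto)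
  · simp [windowMatrix, spanIndicator, Matrix.diagonal_apply, hmem_succ]

lemma linearIndependent_windowMatrix_rows (hspan : ∀ l, IsSpan (G l) (a l) (b l))
    (ha : Function.Injective a) :
    LinearIndependent F
      fun m : {l // circMem n (a l) (b l) i ∨ a l = i} => windowMatrix G a b i m := by
  refine linearIndependent_of_pivot _
    (fun m => if a m = i then Sum.inr (Sum.inl ()) else Sum.inl m.1)
    (fun m => if a m = i then 1 else 0) (fun m => ?_) (fun m m' hne hw => ?_)
  · by_cases hstart : a m = i
    · simpa [windowMatrix, hstart] using (hspan m).1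
    · simp [windowMatrix, spanIndicator, hstart, m.2.resolve_right hstart]
  · by_cases hstart : a m = i
    · have hstart' : a m' = i := by by_contra h; simp [hstart, h] at hw
      exact absurd (Subtype.ext (ha (hstart'.trans hstart.symm))) hne
    · simp [windowMatrix, spanIndicator, hstart, Subtype.val_injective.ne hne]

lemma card_windowMatrix_rows (ha : Function.Injective a) :
    Fintype.card {l // circMem n (a l) (b l) i ∨ a l = i}
      = Fintype.card {l // circMem n (a l) (b l) i} + if ∃ l, a l = i then 1 else 0 := by
  have hdisj : Disjoint (fun l => circMem n (a l) (b l) i) (fun l => a l = i) :=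
    fun _ hmem hstart l hl => (hmem l hl).1 (hstart l hl).symm
  rw [Fintype.card_subtype_or_disjoint _ _ hdisj, Fintype.card_subtype_apply_eq_of_injective ha]

end Window

/-- If the starting points `a_1, …, a_k` are pairwise distinct, then
`rank (M_i | G_i | M_{i+1}) = rank M_i + [i ∈ {a_1,…,a_k}]`. -/
theorem rank_concat_eq_rank_add_indicator_start {F : Type*} [Field F] {n k : ℕ} [NeZero n]
    (G : Matrix (Fin k) (ZMod n) F) (a b : Fin k → ZMod n)
    (hspan : ∀ l, IsSpan (G l) (a l) (b l))
    (ha : Function.Injective a)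
    (M : ZMod n → Matrix (Fin k) (Fin k) F)
    (hM : ∀ i, M i = Matrix.diagonal fun l => if circMem n (a l) (b l) i then (1 : F) else 0)
    (i : ZMod n) :
    (Matrix.of fun l (j : Fin k ⊕ Unit ⊕ Fin k) =>
        Sum.elim (fun j' => M i l j')
          (Sum.elim (fun _ => G l i) fun j' => M (i + 1) l j') j).rank
      = (M i).rank + (if ∃ l, a l = i then 1 else 0) := by
  obtain rfl : M = spanIndicator F a b := funext hM
  change (windowMatrix G a b i).rank = _
  rw [Matrix.rank_eq_card_of_row_eq_zero _ _
      (fun l hl => windowMatrix_row_eq_zero (hspan l) (hl ∘ Or.inl) (hl ∘ Or.inr))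
      (linearIndependent_windowMatrix_rows hspan ha),
    card_windowMatrix_rows ha, rank_spanIndicator]
end

section
/- With notation as before, if the endpoints b_1,...,b_k are pairwise distinct, then for each i, rank(M_i, G_i, M_{i+1}) = rank(M_{i+1}) + [i ∈ {b_1,...,b_k}]. -/
open Submodule Matrix

namespace Pi

variable {K ι : Type*} [DivisionRing K] [Finite ι] [DecidableEq ι]

theorem spanSubset_insert_le {s : Set ι} {l : ι} {U : Submodule K (ι → K)} {v : ι → K}
    (hs : spanSubset K s ≤ U) (hv : v ∈ U) (hsupp : ∀ j ∉ insert l s, v j = 0) (hl : v l ≠ 0) :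
    spanSubset K (insert l s) ≤ U := by
  have hrest : v - Pi.single l (v l) ∈ spanSubset K s := by
    refine mem_spanSubset_iff.2 fun j hj => ?_
    rcases eq_or_ne j l with rfl | hjl
    · simp
    · simp [hjl, hsupp j (by simp [hjl, hj])]
  have hsingle : Pi.single l (v l) ∈ U := by simpa using sub_mem hv (hs hrest)
  rw [spanSubset, Set.image_insert_eq, span_le, Set.insert_subset_iff]
  refine ⟨?_, fun x hx => hs (subset_span hx)⟩
  have : Pi.basisFun K ι l = (v l)⁻¹ • Pi.single l (v l) := by
    rw [Pi.basisFun_apply, ← Pi.single_smul', smul_eq_mul, inv_mul_cancel₀ hl]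
  rw [SetLike.mem_coe, this]
  exact U.smul_mem _ hsingle

end Pi

theorem Function.Injective.ncard_preimage_singleton {α β : Type*} {f : α → β}
    (hf : Function.Injective f) (y : β) [Decidable (∃ x, f x = y)] :
    (f ⁻¹' {y}).ncard = if ∃ x, f x = y then 1 else 0 := by
  split_ifs with h
  · obtain ⟨x, rfl⟩ := h
    rw [← Set.image_singleton, hf.preimage_image, Set.ncard_singleton]
  · simp only [not_exists] at h
    simp [Set.preimage, h]

theorem Matrix.rank_diagonal_ite {R ι : Type*} [Field R] [Fintype ι] [DecidableEq ι]
    (p : ι → Prop) [DecidablePred p] :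
    (diagonal fun l => if p l then (1 : R) else 0).rank = {l | p l}.ncard := by
  classical
  simp [rank_diagonal, Set.ncard_eq_toFinset_card', Fintype.card_subtype]

namespace ZMod

variable {n : ℕ}

theorem val_add_one_of_lt {x : ZMod n} (h : x.val + 1 < n) : (x + 1).val = x.val + 1 := by
  have : Fact (1 < n) := ⟨by omega⟩
  rw [val_add_of_lt (by rwa [val_one]), val_one]

theorem val_add_one_of_ne_zero [NeZero n] {x : ZMod n} (h : x + 1 ≠ 0) :
    (x + 1).val = x.val + 1 := by
  refine val_add_one_of_lt (lt_of_le_of_ne (val_lt x) fun hn => h ?_)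
  rw [← natCast_zmod_val x]
  have : ((x.val + 1 : ℕ) : ZMod n) = 0 := by rw [hn, natCast_self]
  exact_mod_cast this

end ZMod

section CircularInterval

variable {n : ℕ} [NeZero n] {a b j : ZMod n}

theorem circMem_add_one (hj : j = a ∨ circMem n a b j) (hjb : j ≠ b) : circMem n a b (j + 1) := by
  have hle : (j - a).val ≤ (b - a).val := by
    rcases hj with rfl | hj
    · simp
    · exact hj.2
  have hlt : (j - a).val < (b - a).val :=
    hle.lt_of_ne fun h => hjb (sub_left_inj.1 (ZMod.val_injective n h))
  have hval : (j - a + 1).val = (j - a).val + 1 :=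
    ZMod.val_add_one_of_lt (by have := ZMod.val_lt (b - a); omega)
  rw [sub_add_eq_add_sub] at hval
  refine ⟨fun h => ?_, by omega⟩
  rw [h, sub_self, ZMod.val_zero] at hval
  omega

theorem not_circMem_add_one_self : ¬ circMem n a j (j + 1) := by
  rintro ⟨hne, hle⟩
  rw [← sub_add_eq_add_sub, ZMod.val_add_one_of_ne_zero] at hle
  · omega
  · rwa [sub_add_eq_add_sub, sub_ne_zero]

end CircularInterval

section Spans

variable {F : Type*} [Field F] {n : ℕ} [NeZero n]

theorem IsSpan.circMem_add_one_or_eq {g : ZMod n → F} {a b j : ZMod n}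
    (hg : IsSpan g a b) (hj : g j ≠ 0) : circMem n a b (j + 1) ∨ b = j := by
  by_cases hjb : j = b
  · exact Or.inr hjb.symm
  · exact Or.inl (circMem_add_one (not_not.1 (mt (hg.2.2 j) hj)) hjb)

theorem span_cols_concat_eq_spanSubset {k : ℕ}
    (G : Matrix (Fin k) (ZMod n) F) (a b : Fin k → ZMod n)
    (hspan : ∀ l, IsSpan (G l) (a l) (b l)) (hb : Function.Injective b)
    (M : ZMod n → Matrix (Fin k) (Fin k) F)
    (hM : ∀ i, M i = Matrix.diagonal fun l => if circMem n (a l) (b l) i then (1 : F) else 0)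
    (i : ZMod n) :
    span F (Set.range (Matrix.of fun l (j : Fin k ⊕ Unit ⊕ Fin k) =>
        Sum.elim (fun j' => M i l j')
          (Sum.elim (fun _ => G l i) fun j' => M (i + 1) l j') j).col)
      = Pi.spanSubset F ({l | circMem n (a l) (b l) (i + 1)} ∪ b ⁻¹' {i}) := by
  set S := {l | circMem n (a l) (b l) (i + 1)}
  set B := Matrix.of fun l (j : Fin k ⊕ Unit ⊕ Fin k) =>
    Sum.elim (fun j' => M i l j') (Sum.elim (fun _ => G l i) fun j' => M (i + 1) l j') j
  have hS : Pi.spanSubset F S ≤ span F (Set.range B.col) := by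
    refine span_le.2 ?_
    rintro _ ⟨l, hl : circMem n _ _ _, rfl⟩
    refine subset_span ⟨Sum.inr (Sum.inr l), ?_⟩
    ext l'
    rcases eq_or_ne l' l with rfl | h <;> simp [B, *]
  have hG : ∀ l ∉ S ∪ b ⁻¹' {i}, G l i = 0 := fun l hl =>
    not_not.1 fun h => hl ((hspan l).circMem_add_one_or_eq h)
  apply le_antisymm
  · rw [span_le]
    rintro _ ⟨j | ⟨⟩ | j, rfl⟩ <;> refine Pi.mem_spanSubset_iff.2 fun l hl => ?_
    · have hMi : ¬ circMem n (a l) (b l) i := fun h =>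
        hl (Or.inl (circMem_add_one (Or.inr h) fun hbl => hl (Or.inr hbl.symm)))
      simp [B, hM, diagonal_apply, hMi]
    · exact hG l hl
    · have hMi : ¬ circMem n (a l) (b l) (i + 1) := fun h => hl (Or.inl h)
      simp [B, hM, diagonal_apply, hMi]
  · rcases (Set.subsingleton_singleton.preimage hb).eq_empty_or_singleton with he | ⟨l₀, he⟩
    · rwa [he, Set.union_empty]
    · have hl₀ : b l₀ = i := (he ▸ rfl : l₀ ∈ b ⁻¹' {i})
      rw [he, Set.union_singleton] at hG ⊢
      exact Pi.spanSubset_insert_le hS (subset_span ⟨Sum.inr (Sum.inl ()), rfl⟩) hG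
        (show G l₀ i ≠ 0 from hl₀ ▸ (hspan l₀).2.1)

end Spans

/-- If the endpoints `b_1, …, b_k` are pairwise distinct, then
`rank (M_i | G_i | M_{i+1}) = rank M_{i+1} + [i ∈ {b_1,…,b_k}]`. -/
theorem rank_concat_eq_rank_add_indicator_end {F : Type*} [Field F] {n k : ℕ} [NeZero n]
    (G : Matrix (Fin k) (ZMod n) F) (a b : Fin k → ZMod n)
    (hspan : ∀ l, IsSpan (G l) (a l) (b l))
    (hb : Function.Injective b)
    (M : ZMod n → Matrix (Fin k) (Fin k) F)
    (hM : ∀ i, M i = Matrix.diagonal fun l => if circMem n (a l) (b l) i then (1 : F) else 0)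
    (i : ZMod n) :
    (Matrix.of fun l (j : Fin k ⊕ Unit ⊕ Fin k) =>
        Sum.elim (fun j' => M i l j')
          (Sum.elim (fun _ => G l i) fun j' => M (i + 1) l j') j).rank
      = (M (i + 1)).rank + (if ∃ l, b l = i then 1 else 0) := by
  have hdisj : Disjoint {l | circMem n (a l) (b l) (i + 1)} (b ⁻¹' {i}) :=
    Set.disjoint_left.2 fun l hl (hbl : b l = i) => not_circMem_add_one_self (hbl ▸ hl)
  rw [rank_eq_finrank_span_cols, span_cols_concat_eq_spanSubset G a b hspan hb M hM i,
    Pi.dim_spanSubset, Set.ncard_union_eq hdisj, hM, rank_diagonal_ite,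
    hb.ncard_preimage_singleton]
end

section
/- Let M_0,...,M_{n-1} ∈ F^{k×r} be matrices such that row l of M_i is zero whenever i ∉ (a_l,b_l], where (a_l,b_l] are spans (proper circular intervals, each ≠ all of Z/nZ). Then for every v in the row space of M_0 there exist α^{(0)},...,α^{(n-1)} ∈ F^k with α^{(0)} M_0 = v, α^{(i)} − α^{(i+1)} ∈ ker M_{i+1} (left kernel) for i = 0,...,n−2, and α^{(n-1)} M_0 = 0. -/
private lemma vecMul_zero_of_rows {F : Type*} [Field F] {k r : ℕ}
    (x : Fin k → F) (A : Matrix (Fin k) (Fin r) F)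
    (h : ∀ l, x l = 0 ∨ A l = 0) : Matrix.vecMul x A = 0 := by
  funext j
  simp only [Matrix.vecMul, dotProduct, Pi.zero_apply]
  apply Finset.sum_eq_zero
  intro l _
  rcases h l with h | h
  · simp [h]
  · simp [h]

/-- If `0 ∈ (a,b]` then `b.val + 1 < n`. -/
private lemma val_b_lt {n : ℕ} [NeZero n] {a b : ZMod n}
    (h : circMem n a b 0) : b.val + 1 < n := by
  obtain ⟨h0, hle⟩ := h
  have hSpos : (0 - a).val ≠ 0 := by
    simp only [ne_eq, ZMod.val_eq_zero]
    exact sub_ne_zero.mpr h0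
  have hLlt : (b - a).val < n := ZMod.val_lt _
  have hb : (((b - a).val - (0 - a).val : ℕ) : ZMod n) = b := by
    rw [Nat.cast_sub hle, ZMod.natCast_val, ZMod.natCast_val, ZMod.cast_id, ZMod.cast_id]
    ring
  have hv2 : b.val = (b - a).val - (0 - a).val := by
    conv_lhs => rw [← hb]
    exact ZMod.val_cast_of_lt (by omega)
  omega

/-- `b + 1` never lies in `(a, b]`. -/
private lemma not_circMem_b_succ {n : ℕ} [NeZero n] (a b : ZMod n) :
    ¬ circMem n a b (b + 1) := by
  rintro ⟨h0, hle⟩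
  have h1 : b + 1 - a = (b - a) + 1 := by ring
  have hne : (b - a) + 1 ≠ 0 := by rw [← h1, sub_ne_zero]; exact h0
  have key : (b - a) + 1 = (((b - a).val + 1 : ℕ) : ZMod n) := by
    push_cast
    rw [ZMod.natCast_val, ZMod.cast_id]
  by_cases hc : (b - a).val + 1 < n
  · have hval : ((b - a) + 1).val = (b - a).val + 1 := by
      rw [key, ZMod.val_cast_of_lt hc]
    rw [h1, hval] at hle
    omega
  · have hn : (b - a).val + 1 = n := by
      have := ZMod.val_lt (b - a); omega
    exact hne (by rw [key, hn, ZMod.natCast_self])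

/-- Path property: if row `l` of `M_i` vanishes whenever `i ∉ (a_l, b_l]`, then every `v`
in the row space of `M_0` can be steered to `0`: there are `α^{(0)}, …, α^{(n-1)}` with
`α^{(0)} M_0 = v`, `α^{(i)} - α^{(i+1)} ∈ ker M_{i+1}` (left kernel) for `i ≤ n-2`, and
`α^{(n-1)} M_0 = 0`. -/
theorem path_to_zero {F : Type*} [Field F] {n k r : ℕ} [NeZero n]
    (a b : Fin k → ZMod n)
    (M : ZMod n → Matrix (Fin k) (Fin r) F)
    (hrow : ∀ (i : ZMod n) (l : Fin k), ¬ circMem n (a l) (b l) i → M i l = 0)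
    (v : Fin r → F) (hv : ∃ β : Fin k → F, Matrix.vecMul β (M 0) = v) :
    ∃ α : ℕ → Fin k → F,
      Matrix.vecMul (α 0) (M 0) = v ∧
      (∀ i : ℕ, i < n - 1 →
        Matrix.vecMul (α i - α (i + 1)) (M ((i + 1 : ℕ) : ZMod n)) = 0) ∧
      Matrix.vecMul (α (n - 1)) (M 0) = 0 := by
  classical
  obtain ⟨β, hβ⟩ := hv
  set α : ℕ → Fin k → F :=
    fun i l => if circMem n (a l) (b l) 0 ∧ i ≤ (b l).val then β l else 0 with hα
  refine ⟨α, ?_, ?_, ?_⟩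
  · have h0 : Matrix.vecMul (α 0 - β) (M 0) = 0 := by
      apply vecMul_zero_of_rows
      intro l
      by_cases hc : circMem n (a l) (b l) 0
      · left
        simp only [Pi.sub_apply, hα]
        rw [if_pos ⟨hc, Nat.zero_le _⟩, sub_self]
      · right
        exact hrow 0 l hc
    rw [Matrix.sub_vecMul] at h0
    have := sub_eq_zero.mp h0
    rw [this, hβ]
  · intro i hi
    apply vecMul_zero_of_rows
    intro l
    by_cases hc : circMem n (a l) (b l) 0
    · by_cases h2 : i + 1 ≤ (b l).val
      · left
        simp only [Pi.sub_apply, hα]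
        rw [if_pos ⟨hc, by omega⟩, if_pos ⟨hc, h2⟩, sub_self]
      · by_cases h3 : i ≤ (b l).val
        · right
          have hi' : i = (b l).val := by omega
          have hcast : ((i + 1 : ℕ) : ZMod n) = b l + 1 := by
            rw [hi']
            push_cast
            rw [ZMod.natCast_val, ZMod.cast_id]
          rw [hcast]
          exact hrow _ l (not_circMem_b_succ _ _)
        · left
          simp only [Pi.sub_apply, hα]
          rw [if_neg (fun h => h3 h.2), if_neg (fun h => h2 h.2), sub_self]
    · left
      simp only [Pi.sub_apply, hα]
      rw [if_neg (fun h => hc h.1), if_neg (fun h => hc h.1), sub_self]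
  · apply vecMul_zero_of_rows
    intro l
    by_cases hc : circMem n (a l) (b l) 0
    · left
      simp only [hα]
      rw [if_neg]
      rintro ⟨-, h⟩
      have := val_b_lt hc
      omega
    · right
      exact hrow 0 l hc
end

section
/- With N_i as in the BCJR recursion (N_0 = D, N_{i+1} = N_i + G_i H_i), suppose α^{(0)},...,α^{(n-1)} ∈ F^k satisfy α^{(i)} N_{i+1} = α^{(i+1)} N_{i+1} for i = 0,...,n−2. Then the word (α^{(0)} G_0, ..., α^{(n-1)} G_{n-1}) lies in ker H^T = {c ∈ F^n : c H^T = 0} if and only if α^{(n-1)} N_0 = α^{(0)} N_0. -/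
lemma sum_range_zmod {n : ℕ} [NeZero n] {M : Type*} [AddCommMonoid M] (f : ZMod n → M) :
    ∑ i ∈ Finset.range n, f (i : ZMod n) = ∑ j : ZMod n, f j := by
  refine Finset.sum_nbij' (fun i => (i : ZMod n)) (fun j => j.val) ?_ ?_ ?_ ?_ ?_
  · intro i _; exact Finset.mem_univ _
  · intro j _; exact Finset.mem_range.mpr (ZMod.val_lt j)
  · intro i hi; exact ZMod.val_cast_of_lt (Finset.mem_range.mp hi)
  · intro j _; simp [ZMod.natCast_val, ZMod.cast_id]
  · intro i _; rfl

/-- For a path through the BCJR trellis (i.e. `α^{(i)} N_{i+1} = α^{(i+1)} N_{i+1}` for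
`i = 0, …, n-2`), the edge-label word `(α^{(0)} G_0, …, α^{(n-1)} G_{n-1})` lies in
`ker Hᵀ` if and only if the path is a cycle: `α^{(n-1)} N_0 = α^{(0)} N_0`. -/
theorem path_codeword_iff_cycle {F : Type*} [Field F] {n k m : ℕ} [NeZero n]
    (G : Matrix (Fin k) (ZMod n) F) (H : Matrix (Fin m) (ZMod n) F)
    (hGH : G * H.transpose = 0)
    (D : Matrix (Fin k) (Fin m) F)
    (N : ℕ → Matrix (Fin k) (Fin m) F)
    (hN0 : N 0 = D)
    (hNs : ∀ i : ℕ, N (i + 1) =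
      N i + Matrix.of fun l t => G l ((i : ℕ) : ZMod n) * H t ((i : ℕ) : ZMod n))
    (α : ℕ → Fin k → F)
    (hpath : ∀ i : ℕ, i < n - 1 →
      Matrix.vecMul (α i) (N (i + 1)) = Matrix.vecMul (α (i + 1)) (N (i + 1))) :
    Matrix.vecMul (fun j : ZMod n => ∑ l, α j.val l * G l j) H.transpose = 0 ↔
      Matrix.vecMul (α (n - 1)) (N 0) = Matrix.vecMul (α 0) (N 0) := by
  classical
  have hn : 0 < n := Nat.pos_of_ne_zero (NeZero.ne n)
  -- N n = N 0 since G Hᵀ = 0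
  have hNacc : ∀ M : ℕ, N M = N 0 + Matrix.of (fun l t =>
      ∑ i ∈ Finset.range M, G l (i : ZMod n) * H t (i : ZMod n)) := by
    intro M
    induction M with
    | zero => ext l t; simp
    | succ M ih =>
      rw [hNs M, ih]
      ext l t
      simp [Finset.sum_range_succ, add_assoc]
  have hNn : N n = N 0 := by
    rw [hNacc n]
    ext l t
    have : ∑ i ∈ Finset.range n, G l (i : ZMod n) * H t (i : ZMod n)
        = (G * H.transpose) l t := by
      rw [sum_range_zmod (fun j => G l j * H t j)]
      simp [Matrix.mul_apply, Matrix.transpose_apply]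
    simp [Matrix.add_apply, this, hGH]
  -- telescoping
  have htel : ∀ M : ℕ, 1 ≤ M → M ≤ n →
      (∑ i ∈ Finset.range M,
        (Matrix.vecMul (α i) (N (i + 1)) - Matrix.vecMul (α i) (N i)))
      = Matrix.vecMul (α (M - 1)) (N M) - Matrix.vecMul (α 0) (N 0) := by
    intro M hM1 hMn
    induction M with
    | zero => omega
    | succ M ih =>
      rcases Nat.eq_zero_or_pos M with h0 | hMpos
      · subst h0; simp
      · have ihM := ih hMpos (by omega)
        rw [Finset.sum_range_succ, ihM]
        have hstep : Matrix.vecMul (α (M - 1)) (N M) = Matrix.vecMul (α M) (N M) := by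
          have := hpath (M - 1) (by omega)
          rwa [Nat.sub_add_cancel hMpos] at this
        rw [hstep]
        simp only [Nat.add_sub_cancel]
        abel
  have key := htel n hn le_rfl
  -- identify the telescoping sum with vecMul c Hᵀ
  have hsum : (∑ i ∈ Finset.range n,
      (Matrix.vecMul (α i) (N (i + 1)) - Matrix.vecMul (α i) (N i)))
      = Matrix.vecMul (fun j : ZMod n => ∑ l, α j.val l * G l j) H.transpose := by
    ext t
    rw [Finset.sum_apply]
    have h1 : ∀ i ∈ Finset.range n,
        (Matrix.vecMul (α i) (N (i + 1)) - Matrix.vecMul (α i) (N i)) t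
        = ∑ l, α ((i : ZMod n)).val l * G l (i : ZMod n) * H t (i : ZMod n) := by
      intro i hi
      rw [Pi.sub_apply, hNs i]
      simp only [Matrix.vecMul, dotProduct, Matrix.add_apply, Matrix.of_apply,
        mul_add, Finset.sum_add_distrib, add_sub_cancel_left,
        ZMod.val_cast_of_lt (Finset.mem_range.mp hi)]
      exact Finset.sum_congr rfl fun l _ => by ring
    rw [Finset.sum_congr rfl h1,
      sum_range_zmod (fun j => ∑ l, α j.val l * G l j * H t j)]
    simp only [Matrix.vecMul, dotProduct, Matrix.transpose_apply, Finset.sum_mul]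
  rw [← hsum, key, hNn, sub_eq_zero]
end

section
/- With the BCJR matrices N_i defined by N_0 = D (d_l = Σ_{j=a_l}^{n-1} g_{lj} H_j) and N_{i+1} = N_i + G_i H_i: if i ∉ (a_l, b_l], then the l-th row of N_i is zero. -/
/-- Decomposition of `j.val` in terms of `a.val` and `(j - a).val`. -/
lemma val_decomp {n : ℕ} [NeZero n] (a j : ZMod n) :
    j.val = (a.val + (j - a).val) % n := by
  conv_lhs => rw [← sub_add_cancel j a]
  rw [ZMod.val_add, Nat.add_comm]

lemma mod_small_cases {x n : ℕ} [NeZero n] (h : x < n + n) :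
    x % n = if x < n then x else x - n := by
  split
  · exact Nat.mod_eq_of_lt ‹_›
  · rw [Nat.mod_eq_sub_mod (Nat.le_of_not_lt ‹_›)]
    exact Nat.mod_eq_of_lt (by omega)

/-- With the BCJR matrices `N_i` (where `N_0 = D` has rows `d_l = Σ_{j=a_l}^{n-1} g_{lj} H_j`
and `N_{i+1} = N_i + G_i H_i`): if `i ∉ (a_l, b_l]`, then the `l`-th row of `N_i` is zero. -/
theorem bcjr_row_zero_outside_span {F : Type*} [Field F] {n k m : ℕ} [NeZero n]
    (G : Matrix (Fin k) (ZMod n) F) (H : Matrix (Fin m) (ZMod n) F)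
    (hGH : G * H.transpose = 0)
    (a b : Fin k → ZMod n)
    (hspan : ∀ l, IsSpan (G l) (a l) (b l))
    (N : ℕ → Matrix (Fin k) (Fin m) F)
    (hN0 : ∀ (l : Fin k) (t : Fin m),
      N 0 l t = ∑ j ∈ Finset.univ.filter (fun j : ZMod n => (a l).val ≤ j.val), G l j * H t j)
    (hNs : ∀ i : ℕ, N (i + 1) =
      N i + Matrix.of fun l t => G l ((i : ℕ) : ZMod n) * H t ((i : ℕ) : ZMod n)) :
    ∀ i : ℕ, i < n → ∀ l : Fin k,
      ¬ circMem n (a l) (b l) ((i : ℕ) : ZMod n) → N i l = 0 := by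
  intro i hi l hcirc
  obtain ⟨hga, hgb, hsupp⟩ := hspan l
  set A : ℕ := (a l).val with hA
  set B : ℕ := (b l - a l).val with hB
  have hAn : A < n := ZMod.val_lt _
  have hic : ((i : ℕ) : ZMod n).val = i := ZMod.val_cast_of_lt hi
  -- support characterization
  have hsupp' : ∀ j : ZMod n, G l j ≠ 0 → j = a l ∨ (j - a l).val ≤ B := by
    intro j hj
    by_contra h
    push_neg at h
    exact hj (hsupp j (by
      rintro (h1 | ⟨h1, h2⟩)
      · exact h.1 h1
      · exact absurd h2 (by omega)))
  -- total sum is zero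
  have htot : ∀ t : Fin m, ∑ j : ZMod n, G l j * H t j = 0 := by
    intro t
    have := congrFun (congrFun hGH l) t
    simpa [Matrix.mul_apply, Matrix.transpose_apply] using this
  -- formula for N i
  have hform : ∀ (p : ℕ) (t : Fin m), N p l t =
      (∑ j ∈ Finset.univ.filter (fun j : ZMod n => A ≤ j.val), G l j * H t j) +
      ∑ x ∈ Finset.range p, G l ((x : ℕ) : ZMod n) * H t ((x : ℕ) : ZMod n) := by
    intro p
    induction p with
    | zero => intro t; simpa using hN0 l t
    | succ q ih =>
        intro t
        rw [hNs q]
        simp only [Matrix.add_apply, Matrix.of_apply, Finset.sum_range_succ, ih t]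
        ring
  -- convert range sum to a filtered sum over ZMod n
  have hrange : ∀ t : Fin m,
      ∑ x ∈ Finset.range i, G l ((x : ℕ) : ZMod n) * H t ((x : ℕ) : ZMod n) =
      ∑ j ∈ Finset.univ.filter (fun j : ZMod n => j.val < i), G l j * H t j := by
    intro t
    refine Finset.sum_nbij' (fun x => ((x : ℕ) : ZMod n)) (fun j => j.val) ?_ ?_ ?_ ?_ ?_
    · intro x hx
      simp only [Finset.mem_filter, Finset.mem_univ, true_and]
      rw [ZMod.val_cast_of_lt (lt_trans (Finset.mem_range.mp hx) hi)]
      exact Finset.mem_range.mp hx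
    · intro j hj
      simp only [Finset.mem_filter] at hj
      exact Finset.mem_range.mpr hj.2
    · intro x hx
      exact ZMod.val_cast_of_lt (lt_trans (Finset.mem_range.mp hx) hi)
    · intro j _
      exact ZMod.natCast_rightInverse j
    · intro x _; rfl
  -- split total sum
  have hsplitT : ∀ t : Fin m,
      (∑ j ∈ Finset.univ.filter (fun j : ZMod n => A ≤ j.val), G l j * H t j) =
      - ∑ j ∈ Finset.univ.filter (fun j : ZMod n => j.val < A), G l j * H t j := by
    intro t
    have h1 := Finset.sum_filter_add_sum_filter_not Finset.univ
      (fun j : ZMod n => A ≤ j.val) (fun j => G l j * H t j)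
    have h2 : Finset.univ.filter (fun j : ZMod n => ¬ A ≤ j.val) =
        Finset.univ.filter (fun j : ZMod n => j.val < A) := by
      apply Finset.filter_congr; intro j _; simp [Nat.not_le]
    rw [h2, htot t] at h1
    exact eq_neg_of_add_eq_zero_left h1
  -- hence
  have hNval : ∀ t : Fin m, N i l t =
      (∑ j ∈ Finset.univ.filter (fun j : ZMod n => j.val < i), G l j * H t j) -
      ∑ j ∈ Finset.univ.filter (fun j : ZMod n => j.val < A), G l j * H t j := by
    intro t
    rw [hform i t, hrange t, hsplitT t]; ring
  -- unfold the hypothesis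
  rw [circMem] at hcirc
  push_neg at hcirc
  funext t
  show N i l t = 0
  rcases le_or_gt i A with hiA | hiA
  · -- case i ≤ A : the two filtered sums agree
    have hsums : (∑ j ∈ Finset.univ.filter (fun j : ZMod n => j.val < i), G l j * H t j) =
        ∑ j ∈ Finset.univ.filter (fun j : ZMod n => j.val < A), G l j * H t j := by
      apply Finset.sum_subset
      · intro j hj
        simp only [Finset.mem_filter, Finset.mem_univ, true_and] at hj ⊢
        omega
      · intro j hj hj'
        simp only [Finset.mem_filter, Finset.mem_univ, true_and, Nat.not_lt] at hj hj'
        -- i ≤ j.val < A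
        have hja : j ≠ a l := by
          intro h; rw [h] at hj; omega
        have hiA' : i ≠ A := by omega
        have hica : ((i : ℕ) : ZMod n) ≠ a l := by
          intro h
          exact hiA' (by rw [← hic, h])
        have hBlt : B < (((i : ℕ) : ZMod n) - a l).val := hcirc hica
        -- compute (i - a).val = i + n - A
        have hd1 : (((i : ℕ) : ZMod n) - a l).val = i + (n - A) := by
          have := val_decomp (a l) ((i : ℕ) : ZMod n)
          rw [hic] at this
          have hlt : (((i : ℕ) : ZMod n) - a l).val < n := ZMod.val_lt _
          rw [mod_small_cases (by omega)] at this
          split at this <;> omega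
        -- compute (j - a).val = j.val + n - A
        have hd2 : (j - a l).val = j.val + (n - A) := by
          have := val_decomp (a l) j
          have hlt : (j - a l).val < n := ZMod.val_lt _
          rw [mod_small_cases (by omega)] at this
          split at this <;> omega
        have : G l j = 0 := by
          by_contra hg
          rcases hsupp' j hg with h | h
          · exact hja h
          · omega
        rw [this, zero_mul]
    rw [hNval t, hsums, sub_self]
  · -- case A < i : support lies in [A, i)
    have hica : ((i : ℕ) : ZMod n) ≠ a l := by
      intro h
      have := congrArg ZMod.val h
      rw [hic] at this
      omega
    have hBlt : B < i - A := by
      have h1 := hcirc hica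
      have h2 : (((i : ℕ) : ZMod n) - a l).val = i - A := by
        have h3 : (a l).val ≤ (((i : ℕ) : ZMod n)).val := by rw [hic]; omega
        have := ZMod.val_sub h3
        rw [hic] at this
        exact this
      omega
    have hsupport : ∀ j : ZMod n, G l j ≠ 0 → A ≤ j.val ∧ j.val < i := by
      intro j hg
      rcases hsupp' j hg with h | h
      · rw [h]; omega
      · have := val_decomp (a l) j
        have hlt : (j - a l).val < n := ZMod.val_lt _
        rw [mod_small_cases (by omega)] at this
        split at this <;> omega
    have hz1 : (∑ j ∈ Finset.univ.filter (fun j : ZMod n => j.val < A), G l j * H t j) = 0 := by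
      apply Finset.sum_eq_zero
      intro j hj
      simp only [Finset.mem_filter, Finset.mem_univ, true_and] at hj
      by_cases hg : G l j = 0
      · rw [hg, zero_mul]
      · have := hsupport j hg; omega
    have hz2 : (∑ j ∈ Finset.univ.filter (fun j : ZMod n => j.val < i), G l j * H t j) =
        ∑ j : ZMod n, G l j * H t j := by
      apply Finset.sum_subset
      · intro j _; exact Finset.mem_univ j
      · intro j _ hj'
        simp only [Finset.mem_filter, Finset.mem_univ, true_and, Nat.not_lt] at hj'
        by_cases hg : G l j = 0
        · rw [hg, zero_mul]
        · have := hsupport j hg; omega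
    rw [hNval t, hz1, hz2, htot t, sub_zero]
end

section
/- If rank(N_i) = rank(M_i) for all i, then ker M_i = ker N_i (left kernels), and the map φ_i : im M_i → im N_i sending αM_i ↦ αN_i is a well-defined F-linear isomorphism of row spaces. -/
theorem aux_val_sub {p : ℕ} [NeZero p] (x y : ZMod p) :
    (x - y).val = (x.val + p - y.val) % p := by
  have hy := ZMod.val_lt y
  have hx := ZMod.val_lt x
  rcases le_or_gt y.val x.val with h | h
  · rw [ZMod.val_sub h, show x.val + p - y.val = (x.val - y.val) + p by omega,
      Nat.add_mod_right, Nat.mod_eq_of_lt (by omega)]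
  · have hne : y - x ≠ 0 := by
      intro h0; rw [sub_eq_zero] at h0; subst h0; omega
    have : NeZero (y - x) := ⟨hne⟩
    have h1 : (x - y).val = p - (y - x).val := by
      rw [show x - y = -(y - x) by ring, ZMod.val_neg_of_ne_zero]
    rw [h1, ZMod.val_sub h.le, Nat.mod_eq_of_lt (by omega)]
    omega

theorem aux_mod_helper {n : ℕ} (u v : ℕ) (hu : u < n) (hv : v < n) :
    (u + n - v) % n = if v ≤ u then u - v else u + n - v := by
  split
  · rw [show u + n - v = (u - v) + n by omega, Nat.add_mod_right, Nat.mod_eq_of_lt (by omega)]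
  · rw [Nat.mod_eq_of_lt (by omega)]

/-- Rows of `N i` outside the active spans vanish. -/
theorem aux_row_zero {F : Type*} [Field F] {n k m : ℕ} [NeZero n]
    (G : Matrix (Fin k) (ZMod n) F) (H : Matrix (Fin m) (ZMod n) F)
    (hGH : G * H.transpose = 0)
    (a b : Fin k → ZMod n)
    (hspan : ∀ l, IsSpan (G l) (a l) (b l))
    (N : ℕ → Matrix (Fin k) (Fin m) F)
    (hN0 : ∀ (l : Fin k) (t : Fin m),
      N 0 l t = ∑ j ∈ Finset.univ.filter (fun j : ZMod n => (a l).val ≤ j.val), G l j * H t j)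
    (hNs : ∀ i : ℕ, N (i + 1) =
      N i + Matrix.of fun l t => G l ((i : ℕ) : ZMod n) * H t ((i : ℕ) : ZMod n)) :
    ∀ i : ℕ, i < n → ∀ l : Fin k, ¬ circMem n (a l) (b l) ((i : ℕ) : ZMod n) →
      ∀ t : Fin m, N i l t = 0 := by
  have hNform : ∀ i (l : Fin k) (t : Fin m), N i l t =
      (∑ j ∈ Finset.univ.filter (fun j : ZMod n => (a l).val ≤ j.val), G l j * H t j) +
      ∑ s ∈ Finset.range i, G l ((s : ℕ) : ZMod n) * H t ((s : ℕ) : ZMod n) := by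
    intro i
    induction i with
    | zero => intro l t; simp [hN0]
    | succ i ih =>
        intro l t
        rw [hNs i]
        simp only [Matrix.add_apply, Matrix.of_apply, Finset.sum_range_succ, ih l t]
        ring
  intro i hi l hcirc t
  set A := (a l).val with hA
  set B := ((b l) - (a l)).val with hB
  have hAn : A < n := ZMod.val_lt _
  set x : ZMod n → F := fun j => G l j * H t j with hx
  -- total sum is zero
  have htot : ∑ j : ZMod n, x j = 0 := by
    have := congrFun (congrFun hGH l) t
    rw [Matrix.mul_apply] at this
    simpa [Matrix.transpose_apply, hx] using this
  -- support
  have hsupp : ∀ j : ZMod n, ¬ ((j - a l).val ≤ B) → x j = 0 := by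
    intro j hj
    have : ¬ (j = a l ∨ circMem n (a l) (b l) j) := by
      rintro (rfl | hc)
      · exact hj (by simp)
      · exact hj hc.2
    simp [hx, (hspan l).2.2 j this]
  -- translate hcirc
  have hvi : (((i : ℕ) : ZMod n)).val = i := ZMod.val_cast_of_lt hi
  have hci : (((i : ℕ) : ZMod n) - a l).val = (i + n - A) % n := by
    rw [aux_val_sub, hvi]
  have hcirc' : i = A ∨ B < (i + n - A) % n := by
    by_cases hia : ((i : ℕ) : ZMod n) = a l
    · left
      have := congrArg ZMod.val hia
      rwa [hvi] at this
    · right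
      rw [circMem] at hcirc
      push_neg at hcirc
      have := hcirc hia
      omega
  -- the support condition in terms of values
  have hSval : ∀ j : ZMod n, (j - a l).val = (j.val + n - A) % n := fun j => aux_val_sub j (a l)
  rw [hNform i l t]
  classical
  set P : Finset (ZMod n) := Finset.univ.filter (fun j : ZMod n => A ≤ j.val) with hP
  set Q : Finset (ZMod n) := Finset.univ.filter (fun j : ZMod n => j.val < i) with hQ
  have hcast : ∑ s ∈ Finset.range i, G l ((s : ℕ) : ZMod n) * H t ((s : ℕ) : ZMod n)
      = ∑ j ∈ Q, x j := by
    apply Finset.sum_nbij' (i := fun s => ((s : ℕ) : ZMod n)) (j := fun z => z.val)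
    · intro s hs
      simp only [hQ, Finset.mem_filter, Finset.mem_univ, true_and]
      rw [ZMod.val_cast_of_lt (by have := Finset.mem_range.mp hs; omega)]
      exact Finset.mem_range.mp hs
    · intro z hz
      simp only [hQ, Finset.mem_filter, Finset.mem_univ, true_and] at hz
      exact Finset.mem_range.mpr hz
    · intro s hs
      exact ZMod.val_cast_of_lt (by have := Finset.mem_range.mp hs; omega)
    · intro z hz
      exact ZMod.natCast_rightInverse z
    · intro s hs; rfl
  rw [hcast]
  have hkey : ∑ j ∈ P, x j + ∑ j ∈ Q, x j = ∑ j ∈ P ∪ Q, x j + ∑ j ∈ P ∩ Q, x j :=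
    Finset.sum_union_inter.symm
  rw [hkey]
  -- the union sum equals the total sum (terms outside vanish)
  have hunion : ∑ j ∈ P ∪ Q, x j = ∑ j : ZMod n, x j := by
    apply Finset.sum_subset (Finset.subset_univ _)
    intro j _ hj
    simp only [Finset.mem_union, hP, hQ, Finset.mem_filter, Finset.mem_univ, true_and,
      not_or, not_le, not_lt] at hj
    obtain ⟨hj1, hj2⟩ := hj
    apply hsupp
    rw [hSval j]
    have hjv : j.val < n := ZMod.val_lt j
    rw [aux_mod_helper _ _ hjv hAn]
    split
    · omega
    · intro hle
      rcases hcirc' with rfl | hc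
      · omega
      · rw [aux_mod_helper _ _ hi hAn] at hc
        split at hc <;> omega
  -- the intersection sum is zero
  have hinter : ∑ j ∈ P ∩ Q, x j = 0 := by
    rcases le_or_gt i A with hiA | hiA
    · apply Finset.sum_eq_zero
      intro j hj
      simp only [Finset.mem_inter, hP, hQ, Finset.mem_filter, Finset.mem_univ, true_and] at hj
      omega
    · -- i > A, hence i > A + B, and the intersection sum is the total sum
      have hc : B < i - A := by
        rcases hcirc' with rfl | hc
        · omega
        · rw [aux_mod_helper _ _ hi hAn] at hc
          split at hc <;> omega
      have : ∑ j ∈ P ∩ Q, x j = ∑ j : ZMod n, x j := by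
        apply Finset.sum_subset (Finset.subset_univ _)
        intro j _ hj
        simp only [Finset.mem_inter, hP, hQ, Finset.mem_filter, Finset.mem_univ, true_and,
          not_and, not_lt] at hj
        apply hsupp
        rw [hSval j]
        have hjv : j.val < n := ZMod.val_lt j
        rw [aux_mod_helper _ _ hjv hAn]
        split
        · intro hle
          have := hj (by omega)
          omega
        · omega
      rw [this, htot]
  rw [hunion, htot, hinter, zero_add]

/-- If `rank N_i = rank M_i` for all `i`, then the left kernels of `M_i` and `N_i`
coincide and `α M_i ↦ α N_i` is a well-defined linear isomorphism of row spaces. -/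
theorem kernels_eq_and_row_space_iso {F : Type*} [Field F] {n k m : ℕ} [NeZero n]
    (G : Matrix (Fin k) (ZMod n) F) (H : Matrix (Fin m) (ZMod n) F)
    (hGH : G * H.transpose = 0)
    (a b : Fin k → ZMod n)
    (hspan : ∀ l, IsSpan (G l) (a l) (b l))
    (N : ℕ → Matrix (Fin k) (Fin m) F)
    (hN0 : ∀ (l : Fin k) (t : Fin m),
      N 0 l t = ∑ j ∈ Finset.univ.filter (fun j : ZMod n => (a l).val ≤ j.val), G l j * H t j)
    (hNs : ∀ i : ℕ, N (i + 1) =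
      N i + Matrix.of fun l t => G l ((i : ℕ) : ZMod n) * H t ((i : ℕ) : ZMod n))
    (M : ℕ → Matrix (Fin k) (Fin k) F)
    (hM : ∀ i : ℕ, M i = Matrix.diagonal fun l =>
      if circMem n (a l) (b l) ((i : ℕ) : ZMod n) then (1 : F) else 0)
    (hrank : ∀ i : ℕ, i < n → (N i).rank = (M i).rank) :
    ∀ i : ℕ, i < n →
      (∀ α : Fin k → F, Matrix.vecMul α (M i) = 0 ↔ Matrix.vecMul α (N i) = 0) ∧
      ∃ φ : LinearMap.range (M i).vecMulLinear ≃ₗ[F] LinearMap.range (N i).vecMulLinear,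
        ∀ (x : LinearMap.range (M i).vecMulLinear) (α : Fin k → F),
          (x : Fin k → F) = Matrix.vecMul α (M i) →
          (φ x : Fin m → F) = Matrix.vecMul α (N i) := by
  intro i hi
  classical
  have hrow := aux_row_zero G H hGH a b hspan N hN0 hNs i hi
  -- M i * N i = N i
  have hMN : M i * N i = N i := by
    ext l t
    rw [hM i, Matrix.diagonal_mul]
    by_cases hc : circMem n (a l) (b l) ((i : ℕ) : ZMod n)
    · simp [hc]
    · simp [hc, hrow l hc t]
  -- finrank of range of vecMulLinear equals rank
  have hrk : ∀ {m' : ℕ} (A : Matrix (Fin k) (Fin m') F),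
      Module.finrank F (LinearMap.range A.vecMulLinear) = A.rank := by
    intro m' A
    have hv : A.vecMulLinear = A.transpose.mulVecLin := by
      ext v t; simp [Matrix.mulVec_transpose]
    rw [hv]
    exact (Matrix.rank_transpose A)
  -- kernel inclusion
  have hsub : LinearMap.ker (M i).vecMulLinear ≤ LinearMap.ker (N i).vecMulLinear := by
    intro α hα
    rw [LinearMap.mem_ker, Matrix.vecMulLinear_apply] at hα ⊢
    rw [← hMN, ← Matrix.vecMul_vecMul, hα, Matrix.zero_vecMul]
  -- kernel equality
  have hker : LinearMap.ker (M i).vecMulLinear = LinearMap.ker (N i).vecMulLinear := by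
    apply Submodule.eq_of_le_of_finrank_le hsub
    have h1 := LinearMap.finrank_range_add_finrank_ker (M i).vecMulLinear
    have h2 := LinearMap.finrank_range_add_finrank_ker (N i).vecMulLinear
    rw [hrk (M i)] at h1
    rw [hrk (N i)] at h2
    rw [Module.finrank_fintype_fun_eq_card, Fintype.card_fin] at h1 h2
    have := hrank i hi
    omega
  constructor
  · intro α
    constructor
    · intro h
      have : α ∈ LinearMap.ker (N i).vecMulLinear := by
        rw [← hker, LinearMap.mem_ker, Matrix.vecMulLinear_apply]; exact h
      rwa [LinearMap.mem_ker, Matrix.vecMulLinear_apply] at this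
    · intro h
      have : α ∈ LinearMap.ker (M i).vecMulLinear := by
        rw [hker, LinearMap.mem_ker, Matrix.vecMulLinear_apply]; exact h
      rwa [LinearMap.mem_ker, Matrix.vecMulLinear_apply] at this
  · refine ⟨((M i).vecMulLinear.quotKerEquivRange.symm.trans
      ((Submodule.quotEquivOfEq _ _ hker).trans (N i).vecMulLinear.quotKerEquivRange)), ?_⟩
    intro x α hx
    have hxeq : x = (M i).vecMulLinear.quotKerEquivRange (Submodule.Quotient.mk α) := by
      apply Subtype.ext
      rw [hx, LinearMap.quotKerEquivRange_apply_mk, Matrix.vecMulLinear_apply]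
    rw [hxeq]
    simp only [LinearEquiv.trans_apply, LinearEquiv.symm_apply_apply, Submodule.quotEquivOfEq_mk,
      LinearMap.quotKerEquivRange_apply_mk, Matrix.vecMulLinear_apply]
end

section
/- Let N_i be the BCJR matrices for (G, H, spans) and N̂_i = N_i^T the matrices of the dual BCJR construction for (H, G, D^T). Define, on (im N_i × F × im N_{i+1}) × (im N̂_i × F × im N̂_{i+1}), the pairing Π((αN_i, a, α̃N_{i+1}), (βN̂_i, b, β̃N̂_{i+1})) = α N_i β^T + ab − α̃ N_{i+1} β̃^T. Then for all α ∈ F^k, β ∈ F^{n-k}: Π((αN_i, αG_i, αN_{i+1}), (βN̂_i, βH_i^T, βN̂_{i+1})) = 0; i.e., the edge space E_i = im(N_i, G_i, N_{i+1}) and the dual edge space Ê_i = im(N̂_i, H_i^T, N̂_{i+1}) are orthogonal under Π. -/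
/-- The edge spaces of the BCJR trellis of `(G, H, D)` and of the dual BCJR trellis of
`(H, G, Dᵀ)` (whose vertex matrices are `N̂_i = N_iᵀ`) are orthogonal under the pairing
`Π((v, a, w), (v̂, b, ŵ)) = v v̂ᵀ + a b − w ŵᵀ`: for all `α, β`,
`(α N_i)(β N̂_i)ᵀ + (α G_i)(β H_iᵀ) − (α N_{i+1})(β N̂_{i+1})ᵀ = 0`. -/
theorem edge_spaces_orthogonal {F : Type*} [Field F] {n k m : ℕ} [NeZero n]
    (G : Matrix (Fin k) (ZMod n) F) (H : Matrix (Fin m) (ZMod n) F)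
    (hGH : G * H.transpose = 0)
    (D : Matrix (Fin k) (Fin m) F)
    (N : ℕ → Matrix (Fin k) (Fin m) F)
    (hN0 : N 0 = D)
    (hNs : ∀ i : ℕ, N (i + 1) =
      N i + Matrix.of fun l t => G l ((i : ℕ) : ZMod n) * H t ((i : ℕ) : ZMod n)) :
    ∀ i : ℕ, i < n → ∀ (α : Fin k → F) (β : Fin m → F),
      (∑ t, Matrix.vecMul α (N i) t * β t)
        + (∑ l, α l * G l ((i : ℕ) : ZMod n)) * (∑ t, β t * H t ((i : ℕ) : ZMod n))
        - (∑ t, Matrix.vecMul α (N (i + 1)) t * β t) = 0 := by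
  intro i _ α β
  simp only [hNs i, Matrix.vecMul, dotProduct, Matrix.add_apply, Matrix.of_apply,
    mul_add, add_mul, Finset.sum_add_distrib, Finset.mul_sum, Finset.sum_mul]
  rw [Finset.sum_comm]
  ring_nf
  rw [sub_eq_zero]
  exact Finset.sum_congr rfl fun x _ => Finset.sum_congr rfl fun y _ => by ring
end
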